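/- Assume (A,C,ψ,x) is cleft, with λ ∈ Q' convolution invertible with inverse λ⁻¹. Then for every entwined module M: (a) m₀ λ(m₁) ∈ M^{coC} for all m ∈ M; (b) the map κ_M : M → M^{coC} ⊗_k C, κ_M(m) = m₀ λ(m₁) ⊗ m₂, is bijective, its inverse is given by m ⊗ c ↦ m·λ⁻¹(c), and κ_M is right C-colinear (where M^{coC} ⊗_k C carries the coaction id ⊗ Δ). In particular, taking M = A, the resulting bijection exhibits A ≅ B' ⊗_k C as left B'-modules and right C-comodules (the right normal basis property). -/
import Mathlib


open TensorProduct

noncomputable section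

variable {k A C : Type*} [CommRing k] [Ring A] [Algebra k A]
  [AddCommGroup C] [Module k C] [Coalgebra k C]

/-- An entwining structure `(A, C, ψ)`. -/
structure IsEntwining (k : Type*) {A C : Type*} [CommRing k] [Ring A] [Algebra k A]
    [AddCommGroup C] [Module k C] [Coalgebra k C]
    (ψ : C ⊗[k] A →ₗ[k] A ⊗[k] C) : Prop where
  mul_compat : ψ ∘ₗ LinearMap.lTensor C (LinearMap.mul' k A) =
    LinearMap.rTensor C (LinearMap.mul' k A) ∘ₗ (TensorProduct.assoc k A A C).symm.toLinearMap ∘ₗ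
      LinearMap.lTensor A ψ ∘ₗ (TensorProduct.assoc k A C A).toLinearMap ∘ₗ
      LinearMap.rTensor A ψ ∘ₗ (TensorProduct.assoc k C A A).symm.toLinearMap
  one_compat : ∀ c : C, ψ (c ⊗ₜ[k] 1) = 1 ⊗ₜ[k] c
  comul_compat : LinearMap.lTensor A Coalgebra.comul ∘ₗ ψ =
    (TensorProduct.assoc k A C C).toLinearMap ∘ₗ LinearMap.rTensor C ψ ∘ₗ
      (TensorProduct.assoc k C A C).symm.toLinearMap ∘ₗ LinearMap.lTensor C ψ ∘ₗ
      (TensorProduct.assoc k C C A).toLinearMap ∘ₗ LinearMap.rTensor A Coalgebra.comul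
  counit_compat : ∀ (c : C) (a : A),
    TensorProduct.rid k A (LinearMap.lTensor A Coalgebra.counit (ψ (c ⊗ₜ[k] a))) =
      (Coalgebra.counit (R := k) c) • a

/-- The smash product multiplication on `Hom_k(C,A)`: `(f # g)(c) = f(c₂)_ψ g((c₁)^ψ)`. -/
def smashMul (ψ : C ⊗[k] A →ₗ[k] A ⊗[k] C) (f g : C →ₗ[k] A) : C →ₗ[k] A :=
  LinearMap.mul' k A ∘ₗ LinearMap.lTensor A g ∘ₗ ψ ∘ₗ LinearMap.lTensor C f ∘ₗ Coalgebra.comul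

/-- The unit of `#(C,A)`: `c ↦ ε(c) 1_A`. -/
def smashOne (k : Type*) (A C : Type*) [CommRing k] [Ring A] [Algebra k A]
    [AddCommGroup C] [Module k C] [Coalgebra k C] : C →ₗ[k] A :=
  Algebra.linearMap k A ∘ₗ Coalgebra.counit

/-- The ring morphism `i : A → #(C,A)`, `i(a)(c) = ε(c) a`. -/
def smashIota (k : Type*) {A : Type*} (C : Type*) [CommRing k] [Ring A] [Algebra k A]
    [AddCommGroup C] [Module k C] [Coalgebra k C] (a : A) : C →ₗ[k] A :=
  (Coalgebra.counit : C →ₗ[k] k).smulRight a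


/-- Convolution product on `Hom_k(C,A)`: `(f * g)(c) = f(c₁) g(c₂)`. -/
def conv (f g : C →ₗ[k] A) : C →ₗ[k] A :=
  LinearMap.mul' k A ∘ₗ TensorProduct.map f g ∘ₗ Coalgebra.comul

/-- `q ∈ Q'` iff `q(c₂)_ψ ⊗ (c₁)^ψ = q(c) ⊗ x` for all `c`. -/
def QprimeCond (ψ : C ⊗[k] A →ₗ[k] A ⊗[k] C) (x : C) (q : C →ₗ[k] A) : Prop :=
  ∀ c : C, ψ (LinearMap.lTensor C q (Coalgebra.comul c)) = q c ⊗ₜ[k] x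

variable {M : Type*} [AddCommGroup M] [Module k M]

/-- For a right `A`-module `(M, sm)` and `a : A`, the map
`M ⊗ C → M ⊗ C`, `m ⊗ c ↦ (m · a_ψ) ⊗ c^ψ`. -/
def entTheta (ψ : C ⊗[k] A →ₗ[k] A ⊗[k] C) (sm : M →ₗ[k] A →ₗ[k] M) (a : A) :
    M ⊗[k] C →ₗ[k] M ⊗[k] C :=
  LinearMap.rTensor C (TensorProduct.lift sm) ∘ₗ
    (TensorProduct.assoc k M A C).symm.toLinearMap ∘ₗ
    LinearMap.lTensor M (ψ ∘ₗ (TensorProduct.mk k C A).flip a)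

/-- The coinvariants `M^{co C} = {m | ρ(m) = m ⊗ x}` as a `k`-submodule. -/
def coinv (ρM : M →ₗ[k] M ⊗[k] C) (x : C) : Submodule k M :=
  LinearMap.ker (ρM - (TensorProduct.mk k M C).flip x)

/-- `κ_M : M → M ⊗ C`, `κ_M(m) = m₀ λ(m₁) ⊗ m₂` (with image in `M^{co C} ⊗ C`). -/
def kappaM (sm : M →ₗ[k] A →ₗ[k] M) (ρM : M →ₗ[k] M ⊗[k] C) (lam : C →ₗ[k] A) :
    M →ₗ[k] M ⊗[k] C :=
  LinearMap.rTensor C (TensorProduct.lift sm ∘ₗ LinearMap.lTensor M lam) ∘ₗ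
    LinearMap.rTensor C ρM ∘ₗ ρM

/-- `M ⊗ C → M`, `m ⊗ c ↦ m · λ⁻¹(c)`. -/
def kappaInv (sm : M →ₗ[k] A →ₗ[k] M) (lamInv : C →ₗ[k] A) : M ⊗[k] C →ₗ[k] M :=
  TensorProduct.lift sm ∘ₗ LinearMap.lTensor M lamInv


----------------------------------------------------------------
-- Auxiliary material for the proof of `cleft_normal_basis`
----------------------------------------------------------------

set_option linter.unusedSectionVars false in
lemma lT_eq {X Y Z : Type*} [AddCommGroup X] [Module k X] [AddCommGroup Y] [Module k Y]
    [AddCommGroup Z] [Module k Z] (f : Y →ₗ[k] Z) :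
    LinearMap.lTensor X f = TensorProduct.map (LinearMap.id : X →ₗ[k] X) f := rfl

set_option linter.unusedSectionVars false in
lemma rT_eq {X Y Z : Type*} [AddCommGroup X] [Module k X] [AddCommGroup Y] [Module k Y]
    [AddCommGroup Z] [Module k Z] (f : X →ₗ[k] Y) :
    LinearMap.rTensor Z f = TensorProduct.map f (LinearMap.id : Z →ₗ[k] Z) := rfl

/-- Multiplication into the `A`-leg: `a ⊗ (b ⊗ c) ↦ ab ⊗ c`. -/
def opL : A ⊗[k] (A ⊗[k] C) →ₗ[k] A ⊗[k] C :=
  LinearMap.rTensor C (LinearMap.mul' k A) ∘ₗ (TensorProduct.assoc k A A C).symm.toLinearMap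

set_option linter.unusedSectionVars false in
@[simp] lemma opL_tmul (a b : A) (c : C) :
    opL (k := k) (a ⊗ₜ[k] (b ⊗ₜ[k] c)) = (a * b) ⊗ₜ[k] c := by
  simp [opL, LinearMap.mul'_apply]

set_option linter.unusedSectionVars false in
lemma opL_tmul_right (a : A) (t : A ⊗[k] C) :
    opL (k := k) (a ⊗ₜ[k] t) = LinearMap.rTensor C (LinearMap.mulLeft k a) t := by
  induction t using TensorProduct.induction_on with
  | zero => simp [TensorProduct.tmul_zero]
  | tmul b c => simp
  | add u v hu hv => rw [TensorProduct.tmul_add, map_add, hu, hv, map_add]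

set_option linter.unusedSectionVars false in
lemma opL_assoc (v : (A ⊗[k] A) ⊗[k] (A ⊗[k] C)) :
    opL (k := k) (LinearMap.lTensor A (opL (k := k))
        ((TensorProduct.assoc k A A (A ⊗[k] C)) v)) =
      opL (k := k) (LinearMap.rTensor (A ⊗[k] C) (LinearMap.mul' k A) v) := by
  induction v using TensorProduct.induction_on with
  | zero => simp
  | tmul s t =>
    induction s using TensorProduct.induction_on with
    | zero => simp [TensorProduct.zero_tmul]
    | tmul a b =>
      rw [TensorProduct.assoc_tmul, LinearMap.lTensor_tmul, opL_tmul_right,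
        opL_tmul_right, LinearMap.rTensor_tmul, LinearMap.mul'_apply, opL_tmul_right,
        ← LinearMap.comp_apply, ← LinearMap.rTensor_comp, ← LinearMap.mulLeft_mul]
    | add u v hu hv => simp only [TensorProduct.add_tmul, map_add, hu, hv]
  | add u v hu hv => simp only [map_add, hu, hv]

set_option linter.unusedSectionVars false in
/-- `kappaM` as a composite with a single `rTensor`. -/
lemma kappaM_eq (sm : M →ₗ[k] A →ₗ[k] M) (ρM : M →ₗ[k] M ⊗[k] C) (lam : C →ₗ[k] A) :
    kappaM sm ρM lam =
      LinearMap.rTensor C ((TensorProduct.lift sm ∘ₗ LinearMap.lTensor M lam) ∘ₗ ρM) ∘ₗ ρM := by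
  rw [kappaM, ← LinearMap.comp_assoc, ← LinearMap.rTensor_comp, LinearMap.comp_assoc]

set_option linter.unusedSectionVars false in
lemma assoc_tmul_flip (u : M ⊗[k] C) (a : A) :
    (TensorProduct.assoc k M C A) (u ⊗ₜ[k] a) =
      LinearMap.lTensor M ((TensorProduct.mk k C A).flip a) u := by
  induction u using TensorProduct.induction_on with
  | zero => simp [TensorProduct.zero_tmul]
  | tmul m c => simp
  | add u v hu hv => rw [TensorProduct.add_tmul, map_add, hu, hv, map_add]

set_option linter.unusedSectionVars false in
lemma rT_mk_assoc_symm (sm : M →ₗ[k] A →ₗ[k] M) (x : C) (t : M ⊗[k] A) :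
    LinearMap.rTensor C (TensorProduct.lift sm) ((TensorProduct.assoc k M A C).symm
      (LinearMap.lTensor M ((TensorProduct.mk k A C).flip x) t)) =
      TensorProduct.lift sm t ⊗ₜ[k] x := by
  induction t using TensorProduct.induction_on with
  | zero => simp
  | tmul m a => simp
  | add u v hu hv => simp only [map_add, hu, hv, TensorProduct.add_tmul]

set_option linter.unusedSectionVars false in
lemma mk_assoc_lemma (x : C) (s : A ⊗[k] A) :
    (TensorProduct.assoc k A C A) (LinearMap.rTensor A ((TensorProduct.mk k A C).flip x) s) =
      LinearMap.lTensor A (TensorProduct.mk k C A x) s := by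
  induction s using TensorProduct.induction_on with
  | zero => simp
  | tmul a b => simp
  | add u v hu hv => simp only [map_add, hu, hv]

set_option maxHeartbeats 1600000 in
/-- The normal basis theorem for cleft entwining structures: for every entwined
module `M`, `κ_M : M → M^{co C} ⊗ C`, `κ_M(m) = m₀λ(m₁) ⊗ m₂`, is a right
`C`-colinear bijection with inverse `m ⊗ c ↦ m λ⁻¹(c)`; for `M = A` it is moreover
left `B'`-linear, giving `A ≅ B' ⊗ C`. -/
theorem cleft_normal_basis (ψ : C ⊗[k] A →ₗ[k] A ⊗[k] C) (hψ : IsEntwining k ψ)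
    (x : C) (hx1 : Coalgebra.comul (R := k) x = x ⊗ₜ[k] x)
    (hx2 : Coalgebra.counit (R := k) x = (1 : k))
    -- cleftness
    (lam lamInv : C →ₗ[k] A)
    (hinv1 : ∀ c : C, conv lam lamInv c = (Coalgebra.counit (R := k) c) • (1 : A))
    (hinv2 : ∀ c : C, conv lamInv lam c = (Coalgebra.counit (R := k) c) • (1 : A))
    (hlam : QprimeCond ψ x lam)
    -- M is an entwined module
    (sm : M →ₗ[k] A →ₗ[k] M)
    (hsm1 : ∀ m : M, sm m 1 = m)
    (hsm2 : ∀ (m : M) (a b : A), sm m (a * b) = sm (sm m a) b)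
    (ρM : M →ₗ[k] M ⊗[k] C)
    (hcoassoc : ∀ m : M, TensorProduct.assoc k M C C
        (LinearMap.rTensor C ρM (ρM m)) = LinearMap.lTensor M Coalgebra.comul (ρM m))
    (hcounit : ∀ m : M, TensorProduct.rid k M
        (LinearMap.lTensor M Coalgebra.counit (ρM m)) = m)
    (hent : ∀ (m : M) (a : A), ρM (sm m a) = entTheta ψ sm a (ρM m)) :
    -- (a) m₀ λ(m₁) is a coinvariant
    (∀ m : M, TensorProduct.lift sm (LinearMap.lTensor M lam (ρM m)) ∈ coinv ρM x) ∧
    -- κ_M takes values in M^{co C} ⊗ C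
    (∀ m : M, kappaM sm ρM lam m ∈
      LinearMap.range (LinearMap.rTensor C (coinv ρM x).subtype)) ∧
    -- (b) κ_M is bijective with inverse m ⊗ c ↦ m λ⁻¹(c)
    (∀ m : M, kappaInv sm lamInv (kappaM sm ρM lam m) = m) ∧
    (∀ (m : M) (c : C), m ∈ coinv ρM x →
      kappaM sm ρM lam (kappaInv sm lamInv (m ⊗ₜ[k] c)) = m ⊗ₜ[k] c) ∧
    -- κ_M is right C-colinear
    (∀ m : M, LinearMap.rTensor C (kappaM sm ρM lam) (ρM m) =
      (TensorProduct.assoc k M C C).symm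
        (LinearMap.lTensor M Coalgebra.comul (kappaM sm ρM lam m))) ∧
    -- in particular, for M = A (with sm = multiplication, ρ = ψ(x ⊗ –)),
    -- κ_A is left B'-linear : κ_A(b a) = b · κ_A(a) for b ∈ B'
    (∀ b a : A, ψ (x ⊗ₜ[k] b) = b ⊗ₜ[k] x →
      kappaM (LinearMap.mul k A) (ψ ∘ₗ TensorProduct.mk k C A x) lam (b * a) =
        LinearMap.rTensor C (LinearMap.mulLeft k b)
          (kappaM (LinearMap.mul k A) (ψ ∘ₗ TensorProduct.mk k C A x) lam a)) := by
  obtain ⟨hmulψ, honeψ, -, -⟩ := hψ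
  -- Q' as an identity of linear maps
  have hQ : ψ ∘ₗ LinearMap.lTensor C lam ∘ₗ (Coalgebra.comul : C →ₗ[k] C ⊗[k] C) =
      (TensorProduct.mk k A C).flip x ∘ₗ lam := by
    apply LinearMap.ext; intro c
    simpa using hlam c
  -- convolution inverses as identities of linear maps
  have hconv1 : conv lam lamInv =
      (Algebra.linearMap k A) ∘ₗ (Coalgebra.counit : C →ₗ[k] k) := by
    apply LinearMap.ext; intro c
    simp [hinv1 c, Algebra.algebraMap_eq_smul_one]
  have hconv2 : conv lamInv lam =
      (Algebra.linearMap k A) ∘ₗ (Coalgebra.counit : C →ₗ[k] k) := by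
    apply LinearMap.ext; intro c
    simp [hinv2 c, Algebra.algebraMap_eq_smul_one]
  -- the entwined module condition for `lift sm`
  have hent' : ∀ t : M ⊗[k] A, ρM (TensorProduct.lift sm t) =
      LinearMap.rTensor C (TensorProduct.lift sm) ((TensorProduct.assoc k M A C).symm
        (LinearMap.lTensor M ψ ((TensorProduct.assoc k M C A)
          (LinearMap.rTensor A ρM t)))) := by
    intro t
    induction t using TensorProduct.induction_on with
    | zero => simp
    | tmul m a =>
      rw [TensorProduct.lift.tmul, hent m a]
      simp only [entTheta, LinearMap.coe_comp, Function.comp_apply, LinearEquiv.coe_coe,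
        LinearMap.rTensor_tmul, LinearMap.lTensor_comp, assoc_tmul_flip]
    | add u v hu hv => simp only [map_add, hu, hv]
  -- (a): coinvariance of m₀ λ(m₁)
  have hA : ∀ m : M, ρM (TensorProduct.lift sm (LinearMap.lTensor M lam (ρM m))) =
      TensorProduct.lift sm (LinearMap.lTensor M lam (ρM m)) ⊗ₜ[k] x := by
    intro m
    rw [hent']
    have h1 : LinearMap.rTensor A ρM (LinearMap.lTensor M lam (ρM m)) =
        LinearMap.lTensor (M ⊗[k] C) lam (LinearMap.rTensor C ρM (ρM m)) := by
      have e1 := LinearMap.congr_fun (LinearMap.rTensor_comp_lTensor (R := k) (f := ρM) (g := lam)) (ρM m)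
      have e2 := LinearMap.congr_fun (LinearMap.lTensor_comp_rTensor (R := k) (f := ρM) (g := lam)) (ρM m)
      simp only [LinearMap.coe_comp, Function.comp_apply] at e1 e2
      rw [e1, e2]
    rw [h1]
    have h2 : (TensorProduct.assoc k M C A)
        (LinearMap.lTensor (M ⊗[k] C) lam (LinearMap.rTensor C ρM (ρM m))) =
        LinearMap.lTensor M (LinearMap.lTensor C lam)
          ((TensorProduct.assoc k M C C) (LinearMap.rTensor C ρM (ρM m))) := by
      have h := TensorProduct.map_map_assoc (LinearMap.id : M →ₗ[k] M)
        (LinearMap.id : C →ₗ[k] C) lam (LinearMap.rTensor C ρM (ρM m))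
      rw [← lT_eq, ← lT_eq] at h
      rw [TensorProduct.map_id, ← lT_eq] at h
      exact h.symm
    rw [h2, hcoassoc]
    have h3 : LinearMap.lTensor M ψ (LinearMap.lTensor M (LinearMap.lTensor C lam)
        (LinearMap.lTensor M Coalgebra.comul (ρM m))) =
        LinearMap.lTensor M ((TensorProduct.mk k A C).flip x)
          (LinearMap.lTensor M lam (ρM m)) := by
      have h : LinearMap.lTensor M ψ ∘ₗ LinearMap.lTensor M (LinearMap.lTensor C lam) ∘ₗ
          LinearMap.lTensor M (Coalgebra.comul : C →ₗ[k] C ⊗[k] C) =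
          LinearMap.lTensor M ((TensorProduct.mk k A C).flip x) ∘ₗ LinearMap.lTensor M lam := by
        rw [← LinearMap.lTensor_comp, ← LinearMap.lTensor_comp, hQ, LinearMap.lTensor_comp]
      exact LinearMap.congr_fun h (ρM m)
    rw [h3, rT_mk_assoc_symm]
  -- `E m = m₀ λ(m₁)`
  set E : M →ₗ[k] M := (TensorProduct.lift sm ∘ₗ LinearMap.lTensor M lam) ∘ₗ ρM with hE
  have hEapp : ∀ m : M, E m = TensorProduct.lift sm (LinearMap.lTensor M lam (ρM m)) := by
    intro m; simp [hE]
  have hmem : ∀ m : M, E m ∈ coinv ρM x := by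
    intro m
    rw [coinv, LinearMap.mem_ker, LinearMap.sub_apply, sub_eq_zero, hEapp]
    exact hA m
  have hkmap : kappaM sm ρM lam = LinearMap.rTensor C E ∘ₗ ρM := by
    rw [kappaM_eq, hE]
  have hkap : ∀ m : M, kappaM sm ρM lam m = LinearMap.rTensor C E (ρM m) := by
    intro m; rw [hkmap]; rfl
  refine ⟨?_, ?_, ?_, ?_, ?_, ?_⟩
  · -- (a)
    intro m
    have h := hmem m
    rwa [hEapp] at h
  · -- κ_M lands in M^coC ⊗ C
    intro m
    refine ⟨LinearMap.rTensor C (E.codRestrict (coinv ρM x) hmem) (ρM m), ?_⟩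
    rw [← LinearMap.rTensor_comp_apply, LinearMap.subtype_comp_codRestrict, hkap]
  · -- κ⁻¹ ∘ κ = id
    intro m
    rw [hkap m]
    simp only [kappaInv, LinearMap.coe_comp, Function.comp_apply]
    have e1 := LinearMap.congr_fun
      (LinearMap.lTensor_comp_rTensor (R := k) (f := E) (g := lamInv)) (ρM m)
    simp only [LinearMap.coe_comp, Function.comp_apply] at e1
    rw [e1]
    have e2 : TensorProduct.map E lamInv =
        LinearMap.rTensor A (TensorProduct.lift sm) ∘ₗ
          TensorProduct.map (LinearMap.lTensor M lam) lamInv ∘ₗ LinearMap.rTensor C ρM := by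
      rw [hE, rT_eq (TensorProduct.lift sm), rT_eq ρM, ← TensorProduct.map_comp,
        ← TensorProduct.map_comp]
      simp only [LinearMap.comp_assoc, LinearMap.id_comp, LinearMap.comp_id]
    have e2' := LinearMap.congr_fun e2 (ρM m)
    simp only [LinearMap.coe_comp, Function.comp_apply] at e2'
    rw [e2']
    have S4 : ∀ v : (M ⊗[k] A) ⊗[k] A, TensorProduct.lift sm
        (LinearMap.rTensor A (TensorProduct.lift sm) v) =
        TensorProduct.lift sm (LinearMap.lTensor M (LinearMap.mul' k A)
          ((TensorProduct.assoc k M A A) v)) := by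
      intro v
      induction v using TensorProduct.induction_on with
      | zero => simp
      | tmul u a =>
        induction u using TensorProduct.induction_on with
        | zero => simp [TensorProduct.zero_tmul]
        | tmul m' a' =>
          simp only [LinearMap.rTensor_tmul, TensorProduct.lift.tmul,
            TensorProduct.assoc_tmul, LinearMap.lTensor_tmul, LinearMap.mul'_apply]
          rw [hsm2]
        | add u v hu hv => simp only [TensorProduct.add_tmul, map_add, hu, hv]
      | add u v hu hv => simp only [map_add, hu, hv]
    rw [S4]
    have hnat := TensorProduct.map_map_assoc (LinearMap.id : M →ₗ[k] M) lam lamInv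
      (LinearMap.rTensor C ρM (ρM m))
    rw [← lT_eq, ← lT_eq] at hnat
    rw [← hnat, hcoassoc]
    have fuse : LinearMap.lTensor M (LinearMap.mul' k A) ∘ₗ
        LinearMap.lTensor M (TensorProduct.map lam lamInv) ∘ₗ
        LinearMap.lTensor M (Coalgebra.comul : C →ₗ[k] C ⊗[k] C) =
        LinearMap.lTensor M (conv lam lamInv) := by
      rw [← LinearMap.lTensor_comp, ← LinearMap.lTensor_comp]; rfl
    have fuse' := LinearMap.congr_fun fuse (ρM m)
    simp only [LinearMap.coe_comp, Function.comp_apply] at fuse'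
    rw [fuse', hconv1]
    have S5 : ∀ u : M ⊗[k] C, TensorProduct.lift sm (LinearMap.lTensor M
        ((Algebra.linearMap k A) ∘ₗ (Coalgebra.counit : C →ₗ[k] k)) u) =
        TensorProduct.rid k M (LinearMap.lTensor M (Coalgebra.counit : C →ₗ[k] k) u) := by
      intro u
      induction u using TensorProduct.induction_on with
      | zero => simp
      | tmul m' c' =>
        simp only [LinearMap.lTensor_tmul, TensorProduct.lift.tmul, LinearMap.coe_comp,
          Function.comp_apply, Algebra.linearMap_apply, TensorProduct.rid_tmul,
          Algebra.algebraMap_eq_smul_one, map_smul]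
        rw [hsm1]
      | add u v hu hv => simp only [map_add, hu, hv]
    rw [S5, hcounit]
  · -- κ ∘ κ⁻¹ = id
    intro m c hm
    have hmx : ρM m = m ⊗ₜ[k] x := by
      rw [coinv, LinearMap.mem_ker, LinearMap.sub_apply, sub_eq_zero] at hm
      exact hm
    set P : C →ₗ[k] A ⊗[k] C := (ψ ∘ₗ TensorProduct.mk k C A x) ∘ₗ lamInv with hP
    -- Step (i): `ψ((conv λ λ⁻¹ ⊗ id)Δc) = 1 ⊗ c`
    have Ui : ∀ c' : C, ψ (LinearMap.lTensor C (conv lam lamInv) (Coalgebra.comul c')) =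
        (1 : A) ⊗ₜ[k] c' := by
      intro c'
      rw [hconv1, LinearMap.lTensor_comp, LinearMap.comp_apply,
        Coalgebra.lTensor_counit_comul, LinearMap.lTensor_tmul, Algebra.linearMap_apply,
        map_one]
      exact honeψ c'
    -- Step (ii): the same element equals `λ(c₁)·P(c₂)`
    have Uii : ∀ c' : C, ψ (LinearMap.lTensor C (conv lam lamInv) (Coalgebra.comul c')) =
        opL (k := k) (TensorProduct.map lam P (Coalgebra.comul c')) := by
      intro c'
      have e0 : LinearMap.lTensor C (conv lam lamInv) =
          LinearMap.lTensor C (LinearMap.mul' k A) ∘ₗ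
            LinearMap.lTensor C (TensorProduct.map lam lamInv) ∘ₗ
            LinearMap.lTensor C (Coalgebra.comul : C →ₗ[k] C ⊗[k] C) := by
        rw [conv, LinearMap.lTensor_comp, LinearMap.lTensor_comp]
      rw [e0]
      simp only [LinearMap.coe_comp, Function.comp_apply]
      rw [← Coalgebra.coassoc_apply c']
      have hμ := LinearMap.congr_fun hmulψ (LinearMap.lTensor C (TensorProduct.map lam lamInv)
        ((TensorProduct.assoc k C C C)
          (LinearMap.rTensor C (Coalgebra.comul : C →ₗ[k] C ⊗[k] C) (Coalgebra.comul c'))))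
      simp only [LinearMap.coe_comp, Function.comp_apply, LinearEquiv.coe_coe] at hμ
      rw [hμ]
      have h1 : (TensorProduct.assoc k C A A).symm
          (LinearMap.lTensor C (TensorProduct.map lam lamInv) ((TensorProduct.assoc k C C C)
            (LinearMap.rTensor C (Coalgebra.comul : C →ₗ[k] C ⊗[k] C) (Coalgebra.comul c')))) =
          TensorProduct.map (LinearMap.lTensor C lam) lamInv
            (LinearMap.rTensor C (Coalgebra.comul : C →ₗ[k] C ⊗[k] C) (Coalgebra.comul c')) := by
        have h := TensorProduct.map_map_assoc (LinearMap.id : C →ₗ[k] C) lam lamInv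
          (LinearMap.rTensor C (Coalgebra.comul : C →ₗ[k] C ⊗[k] C) (Coalgebra.comul c'))
        rw [← lT_eq, ← lT_eq] at h
        rw [LinearEquiv.symm_apply_eq]
        exact h
      rw [h1]
      have h2c : LinearMap.rTensor A ψ ∘ₗ TensorProduct.map (LinearMap.lTensor C lam) lamInv ∘ₗ
          LinearMap.rTensor C (Coalgebra.comul : C →ₗ[k] C ⊗[k] C) =
          TensorProduct.map (ψ ∘ₗ LinearMap.lTensor C lam ∘ₗ
            (Coalgebra.comul : C →ₗ[k] C ⊗[k] C)) lamInv := by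
        rw [rT_eq ψ, rT_eq (Coalgebra.comul : C →ₗ[k] C ⊗[k] C), ← TensorProduct.map_comp,
          ← TensorProduct.map_comp]
        simp only [LinearMap.comp_assoc, LinearMap.id_comp, LinearMap.comp_id]
      have h2 := LinearMap.congr_fun h2c (Coalgebra.comul c')
      simp only [LinearMap.coe_comp, Function.comp_apply] at h2
      rw [h2, hQ]
      have h4c : TensorProduct.map ((TensorProduct.mk k A C).flip x ∘ₗ lam) lamInv =
          LinearMap.rTensor A ((TensorProduct.mk k A C).flip x) ∘ₗ
            TensorProduct.map lam lamInv := by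
        rw [rT_eq, ← TensorProduct.map_comp, LinearMap.id_comp]
      rw [h4c]
      simp only [LinearMap.coe_comp, Function.comp_apply]
      rw [mk_assoc_lemma]
      have h6c : LinearMap.lTensor A ψ ∘ₗ LinearMap.lTensor A (TensorProduct.mk k C A x) ∘ₗ
          TensorProduct.map lam lamInv = TensorProduct.map lam P := by
        rw [← LinearMap.comp_assoc, ← LinearMap.lTensor_comp, hP,
          lT_eq (ψ ∘ₗ TensorProduct.mk k C A x), ← TensorProduct.map_comp,
          LinearMap.id_comp]
      have h6 := LinearMap.congr_fun h6c (Coalgebra.comul c')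
      simp only [LinearMap.coe_comp, Function.comp_apply] at h6
      rw [h6]
      rfl
    have SA : ∀ c' : C, opL (k := k) (TensorProduct.map lam P (Coalgebra.comul c')) =
        (1 : A) ⊗ₜ[k] c' := fun c' => (Uii c').symm.trans (Ui c')
    have hPsa : (opL (k := k) ∘ₗ TensorProduct.map lam P ∘ₗ
        (Coalgebra.comul : C →ₗ[k] C ⊗[k] C)) = TensorProduct.mk k A C 1 := by
      apply LinearMap.ext; intro c'
      simpa using SA c'
    have way1 : ∀ u : C ⊗[k] C, opL (k := k)
        (TensorProduct.map lamInv (TensorProduct.mk k A C 1) u) =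
        LinearMap.rTensor C lamInv u := by
      intro u
      induction u using TensorProduct.induction_on with
      | zero => simp
      | tmul c1 c2 => simp
      | add u v hu hv => simp only [map_add, hu, hv]
    have way2 : ∀ c' : C, opL (k := k) (TensorProduct.map lamInv
        (opL (k := k) ∘ₗ TensorProduct.map lam P ∘ₗ (Coalgebra.comul : C →ₗ[k] C ⊗[k] C))
        (Coalgebra.comul c')) = P c' := by
      intro c'
      have s1 : TensorProduct.map lamInv (opL (k := k) ∘ₗ TensorProduct.map lam P ∘ₗ
          (Coalgebra.comul : C →ₗ[k] C ⊗[k] C)) =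
          LinearMap.lTensor A (opL (k := k)) ∘ₗ
            LinearMap.lTensor A (TensorProduct.map lam P) ∘ₗ
            TensorProduct.map lamInv (Coalgebra.comul : C →ₗ[k] C ⊗[k] C) := by
        apply TensorProduct.ext'
        intro c1 c2
        simp
      rw [s1]
      simp only [LinearMap.coe_comp, Function.comp_apply]
      have s2 : TensorProduct.map lamInv (Coalgebra.comul : C →ₗ[k] C ⊗[k] C) =
          LinearMap.rTensor (C ⊗[k] C) lamInv ∘ₗ
            LinearMap.lTensor C (Coalgebra.comul : C →ₗ[k] C ⊗[k] C) :=
        (LinearMap.rTensor_comp_lTensor (R := k) (f := lamInv)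
          (g := (Coalgebra.comul : C →ₗ[k] C ⊗[k] C))).symm
      rw [s2]
      simp only [LinearMap.coe_comp, Function.comp_apply]
      rw [← Coalgebra.coassoc_apply c']
      have s3 : LinearMap.rTensor (C ⊗[k] C) lamInv ((TensorProduct.assoc k C C C)
          (LinearMap.rTensor C (Coalgebra.comul : C →ₗ[k] C ⊗[k] C) (Coalgebra.comul c'))) =
          (TensorProduct.assoc k A C C) (LinearMap.rTensor C (LinearMap.rTensor C lamInv)
            (LinearMap.rTensor C (Coalgebra.comul : C →ₗ[k] C ⊗[k] C) (Coalgebra.comul c'))) := by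
        have h := TensorProduct.map_map_assoc lamInv (LinearMap.id : C →ₗ[k] C)
          (LinearMap.id : C →ₗ[k] C)
          (LinearMap.rTensor C (Coalgebra.comul : C →ₗ[k] C ⊗[k] C) (Coalgebra.comul c'))
        rw [TensorProduct.map_id, ← rT_eq, ← rT_eq, ← rT_eq] at h
        exact h
      rw [s3]
      have h7 := TensorProduct.map_map_assoc (LinearMap.id : A →ₗ[k] A) lam P
        (LinearMap.rTensor C (LinearMap.rTensor C lamInv)
          (LinearMap.rTensor C (Coalgebra.comul : C →ₗ[k] C ⊗[k] C) (Coalgebra.comul c')))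
      rw [← lT_eq, ← lT_eq] at h7
      rw [h7, opL_assoc]
      have s4 : LinearMap.rTensor (A ⊗[k] C) (LinearMap.mul' k A) ∘ₗ
          TensorProduct.map (LinearMap.lTensor A lam) P ∘ₗ
          LinearMap.rTensor C (LinearMap.rTensor C lamInv) ∘ₗ
          LinearMap.rTensor C (Coalgebra.comul : C →ₗ[k] C ⊗[k] C) =
          TensorProduct.map (conv lamInv lam) P := by
        apply TensorProduct.ext'
        intro c1 c2
        simp only [LinearMap.coe_comp, Function.comp_apply, TensorProduct.map_tmul,
          LinearMap.rTensor_tmul]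
        congr 1
        have e := LinearMap.congr_fun (LinearMap.lTensor_comp_rTensor (R := k)
          (f := lamInv) (g := lam)) (Coalgebra.comul c1)
        simp only [LinearMap.coe_comp, Function.comp_apply] at e
        rw [conv]
        simp only [LinearMap.coe_comp, Function.comp_apply]
        rw [e]
      have s4' := LinearMap.congr_fun s4 (Coalgebra.comul c')
      simp only [LinearMap.coe_comp, Function.comp_apply] at s4'
      rw [s4', hconv2]
      have s5 : ∀ u : C ⊗[k] C, opL (k := k) (TensorProduct.map
          ((Algebra.linearMap k A) ∘ₗ (Coalgebra.counit : C →ₗ[k] k)) P u) =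
          P (TensorProduct.lid k C (LinearMap.rTensor C
            (Coalgebra.counit : C →ₗ[k] k) u)) := by
        intro u
        induction u using TensorProduct.induction_on with
        | zero => simp
        | tmul c1 c2 =>
          simp only [TensorProduct.map_tmul, LinearMap.coe_comp, Function.comp_apply,
            Algebra.linearMap_apply, LinearMap.rTensor_tmul, TensorProduct.lid_tmul,
            map_smul, Algebra.algebraMap_eq_smul_one]
          have e : opL (k := k) ((Coalgebra.counit (R := k) c1 • (1 : A)) ⊗ₜ[k] P c2) =
              Coalgebra.counit (R := k) c1 • opL (k := k) ((1 : A) ⊗ₜ[k] P c2) := by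
            rw [← TensorProduct.smul_tmul', map_smul]
          rw [e, opL_tmul_right, LinearMap.mulLeft_one, LinearMap.rTensor_id,
            LinearMap.id_apply]
        | add u v hu hv => simp only [map_add, hu, hv]
      rw [s5, Coalgebra.rTensor_counit_comul, TensorProduct.lid_tmul, one_smul]
    -- (L1): `ψ(x ⊗ λ⁻¹(c')) = λ⁻¹(c'₁) ⊗ c'₂`
    have L1 : ∀ c' : C, P c' = LinearMap.rTensor C lamInv (Coalgebra.comul c') := by
      intro c'
      have h := way2 c'
      rw [hPsa] at h
      rw [← h, way1]
    have hwE : ∀ c' : C, (LinearMap.mul' k A) (LinearMap.lTensor A lam (P c')) =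
        Algebra.linearMap k A (Coalgebra.counit (R := k) c') := by
      intro c'
      rw [L1]
      have e := LinearMap.congr_fun (LinearMap.lTensor_comp_rTensor (R := k)
        (f := lamInv) (g := lam)) (Coalgebra.comul c')
      simp only [LinearMap.coe_comp, Function.comp_apply] at e
      rw [e]
      have : LinearMap.mul' k A (TensorProduct.map lamInv lam (Coalgebra.comul c')) =
          conv lamInv lam c' := rfl
      rw [this, hconv2]
      rfl
    -- (L2)
    have L2 : LinearMap.rTensor C (LinearMap.mul' k A ∘ₗ LinearMap.lTensor A lam ∘ₗ
        (ψ ∘ₗ TensorProduct.mk k C A x)) (P c) = (1 : A) ⊗ₜ[k] c := by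
      rw [L1 c, ← LinearMap.rTensor_comp_apply]
      have e : (LinearMap.mul' k A ∘ₗ LinearMap.lTensor A lam ∘ₗ
          (ψ ∘ₗ TensorProduct.mk k C A x)) ∘ₗ lamInv =
          (Algebra.linearMap k A) ∘ₗ (Coalgebra.counit : C →ₗ[k] k) := by
        apply LinearMap.ext; intro c'
        simp only [LinearMap.coe_comp, Function.comp_apply, TensorProduct.mk_apply]
        exact hwE c'
      rw [e, LinearMap.rTensor_comp_apply, Coalgebra.rTensor_counit_comul,
        LinearMap.rTensor_tmul, Algebra.linearMap_apply, map_one]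
    -- assembly
    have hki : kappaInv sm lamInv (m ⊗ₜ[k] c) = sm m (lamInv c) := by
      simp [kappaInv]
    rw [hki, hkap]
    have hentm : ∀ a : A, ρM (sm m a) = LinearMap.rTensor C (TensorProduct.lift sm)
        ((TensorProduct.assoc k M A C).symm (m ⊗ₜ[k] ψ (x ⊗ₜ[k] a))) := by
      intro a
      rw [hent m a]
      simp only [entTheta, LinearMap.coe_comp, Function.comp_apply, LinearEquiv.coe_coe]
      rw [hmx, LinearMap.lTensor_tmul]
      simp only [LinearMap.coe_comp, Function.comp_apply, LinearMap.flip_apply,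
        TensorProduct.mk_apply]
    have S9 : ∀ t : A ⊗[k] C, TensorProduct.lift sm (LinearMap.lTensor M lam
        (LinearMap.rTensor C (TensorProduct.lift sm)
          ((TensorProduct.assoc k M A C).symm (m ⊗ₜ[k] t)))) =
        sm m (LinearMap.mul' k A (LinearMap.lTensor A lam t)) := by
      intro t
      induction t using TensorProduct.induction_on with
      | zero => simp
      | tmul a' c' =>
        simp only [TensorProduct.assoc_symm_tmul, LinearMap.rTensor_tmul,
          TensorProduct.lift.tmul, LinearMap.lTensor_tmul, LinearMap.mul'_apply]
        rw [hsm2]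
      | add u v hu hv => simp only [TensorProduct.tmul_add, map_add, hu, hv]
    have S8 : ∀ t : A ⊗[k] C, LinearMap.rTensor C E (LinearMap.rTensor C
        (TensorProduct.lift sm) ((TensorProduct.assoc k M A C).symm (m ⊗ₜ[k] t))) =
        LinearMap.rTensor C (TensorProduct.lift sm) ((TensorProduct.assoc k M A C).symm
          (m ⊗ₜ[k] (LinearMap.rTensor C (LinearMap.mul' k A ∘ₗ LinearMap.lTensor A lam ∘ₗ
            (ψ ∘ₗ TensorProduct.mk k C A x)) t))) := by
      intro t
      induction t using TensorProduct.induction_on with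
      | zero => simp
      | tmul a' c' =>
        simp only [TensorProduct.assoc_symm_tmul, LinearMap.rTensor_tmul,
          TensorProduct.lift.tmul, LinearMap.coe_comp, Function.comp_apply,
          TensorProduct.mk_apply]
        congr 1
        rw [hEapp, hentm a', S9]
      | add u v hu hv => simp only [TensorProduct.tmul_add, map_add, hu, hv]
    rw [hentm (lamInv c), S8]
    have hPc : ψ (x ⊗ₜ[k] lamInv c) = P c := rfl
    rw [hPc, L2, TensorProduct.assoc_symm_tmul, LinearMap.rTensor_tmul,
      TensorProduct.lift.tmul, hsm1]
  · -- colinearity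
    intro m
    rw [hkmap]
    have lhs : LinearMap.rTensor C (LinearMap.rTensor C E ∘ₗ ρM) (ρM m) =
        LinearMap.rTensor C (LinearMap.rTensor C E)
          (LinearMap.rTensor C ρM (ρM m)) := by
      rw [LinearMap.rTensor_comp, LinearMap.comp_apply]
    rw [lhs]
    have rhs1 : LinearMap.lTensor M Coalgebra.comul ((LinearMap.rTensor C E ∘ₗ ρM) m) =
        LinearMap.rTensor (C ⊗[k] C) E (LinearMap.lTensor M Coalgebra.comul (ρM m)) := by
      have e1 := LinearMap.congr_fun
        (LinearMap.lTensor_comp_rTensor (R := k) (f := E) (g := (Coalgebra.comul : C →ₗ[k] C ⊗[k] C))) (ρM m)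
      have e2 := LinearMap.congr_fun
        (LinearMap.rTensor_comp_lTensor (R := k) (f := E) (g := (Coalgebra.comul : C →ₗ[k] C ⊗[k] C))) (ρM m)
      simp only [LinearMap.coe_comp, Function.comp_apply] at e1 e2
      rw [LinearMap.comp_apply, e1, e2]
    rw [rhs1, ← hcoassoc]
    have h5 := TensorProduct.map_map_assoc E (LinearMap.id : C →ₗ[k] C)
      (LinearMap.id : C →ₗ[k] C) (LinearMap.rTensor C ρM (ρM m))
    rw [TensorProduct.map_id, ← rT_eq, ← rT_eq, ← rT_eq] at h5
    rw [h5, LinearEquiv.symm_apply_apply]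
  · -- left B'-linearity of κ_A
    intro b a hb
    have hmulL : ∀ a' : A, ψ (x ⊗ₜ[k] (b * a')) =
        LinearMap.rTensor C (LinearMap.mulLeft k b) (ψ (x ⊗ₜ[k] a')) := by
      intro a'
      have h := LinearMap.congr_fun hmulψ (x ⊗ₜ[k] (b ⊗ₜ[k] a'))
      simp only [LinearMap.coe_comp, Function.comp_apply, LinearEquiv.coe_coe] at h
      rw [LinearMap.lTensor_tmul, LinearMap.mul'_apply] at h
      rw [h, TensorProduct.assoc_symm_tmul, LinearMap.rTensor_tmul, hb,
        TensorProduct.assoc_tmul, LinearMap.lTensor_tmul]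
      exact opL_tmul_right b (ψ (x ⊗ₜ[k] a'))
    have hkapA : ∀ a' : A, kappaM (LinearMap.mul k A) (ψ ∘ₗ TensorProduct.mk k C A x) lam a' =
        LinearMap.rTensor C ((TensorProduct.lift (LinearMap.mul k A) ∘ₗ LinearMap.lTensor A lam)
          ∘ₗ (ψ ∘ₗ TensorProduct.mk k C A x)) (ψ (x ⊗ₜ[k] a')) := by
      intro a'
      rw [kappaM_eq]
      simp only [LinearMap.coe_comp, Function.comp_apply, TensorProduct.mk_apply]
    have hS7 : ∀ t : A ⊗[k] C, TensorProduct.lift (LinearMap.mul k A)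
        (LinearMap.lTensor A lam (LinearMap.rTensor C (LinearMap.mulLeft k b) t)) =
        b * TensorProduct.lift (LinearMap.mul k A) (LinearMap.lTensor A lam t) := by
      intro t
      induction t using TensorProduct.induction_on with
      | zero => simp
      | tmul a' c' =>
        simp only [LinearMap.rTensor_tmul, LinearMap.lTensor_tmul, TensorProduct.lift.tmul,
          LinearMap.mulLeft_apply, LinearMap.mul_apply']
        rw [mul_assoc]
      | add u v hu hv => simp only [map_add, hu, hv, mul_add]
    have hEAcomm : ((TensorProduct.lift (LinearMap.mul k A) ∘ₗ LinearMap.lTensor A lam)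
        ∘ₗ (ψ ∘ₗ TensorProduct.mk k C A x)) ∘ₗ LinearMap.mulLeft k b =
        LinearMap.mulLeft k b ∘ₗ ((TensorProduct.lift (LinearMap.mul k A) ∘ₗ
          LinearMap.lTensor A lam) ∘ₗ (ψ ∘ₗ TensorProduct.mk k C A x)) := by
      apply LinearMap.ext; intro a'
      simp only [LinearMap.coe_comp, Function.comp_apply, TensorProduct.mk_apply,
        LinearMap.mulLeft_apply]
      rw [hmulL a', hS7]
    rw [hkapA (b * a), hkapA a, hmulL a, ← LinearMap.rTensor_comp_apply,
      hEAcomm, LinearMap.rTensor_comp_apply]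


end
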